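/- arXiv:2009.02777 — 4 statements merged into one kernel-verified Lean document; each statement's English description precedes it below -/
import Mathlib

section
/- Let f be a characteristic function whose essential support S_f has exactly 2k+1 connected components (k ≥ 0 an integer), and let n ≥ 2 be an integer. Then the set C_n(f) = {g a characteristic function : g^n = f^n} has cardinality at most n^k. -/
/-!
For `g` in `C_n(f)`, the ratio `g / f` is continuous on `S_f` with values in the `n`-th roots of
unity, hence constant on each component of `S_f`. It equals `1` on the component of `0` (as
`g 0 = f 0 = 1`), `g` vanishes off `S_f`, and `g (-x) = conj (g x)` makes the values on the `k`
components of `S_f` in `(0, ∞)` determine `g` everywhere. So `g` is determined by `k` roots of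
unity.
-/

open MeasureTheory Set

/-- The characteristic function of a measure `μ` on `ℝ`: `x ↦ ∫ e^{ixt} dμ(t)`. -/
noncomputable def charFunOf (μ : Measure ℝ) : ℝ → ℂ :=
  fun x => ∫ t, Complex.exp (x * t * Complex.I) ∂μ

/-- `f` is the characteristic function of some probability measure on `ℝ`. -/
def IsCharFun (f : ℝ → ℂ) : Prop :=
  ∃ μ : Measure ℝ, IsProbabilityMeasure μ ∧ f = charFunOf μ

open ComplexConjugate Pointwise

namespace IsCharFun

variable {f : ℝ → ℂ}

theorem exists_eq_charFun (hf : IsCharFun f) :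
    ∃ μ : Measure ℝ, IsProbabilityMeasure μ ∧ f = charFun μ := by
  obtain ⟨μ, hμ, rfl⟩ := hf
  exact ⟨μ, hμ, funext fun x => (charFun_apply_real x).symm⟩

theorem continuous (hf : IsCharFun f) : Continuous f := by
  obtain ⟨μ, hμ, rfl⟩ := hf.exists_eq_charFun
  exact continuous_charFun

theorem map_zero (hf : IsCharFun f) : f 0 = 1 := by
  obtain ⟨μ, hμ, rfl⟩ := hf.exists_eq_charFun
  simp

theorem map_neg (hf : IsCharFun f) (x : ℝ) : f (-x) = conj (f x) := by
  obtain ⟨μ, hμ, rfl⟩ := hf.exists_eq_charFun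
  exact charFun_neg x

end IsCharFun

theorem Polynomial.card_nthRootsFinset_le {R : Type*} [CommRing R] [IsDomain R] (n : ℕ) (a : R) :
    (nthRootsFinset n a).card ≤ n := by
  classical
  rw [nthRootsFinset_def]
  exact (Multiset.toFinset_card_le _).trans (card_nthRoots n a)

theorem IsPreconnected.eqOn_of_pow_eq_pow {X : Type*} [TopologicalSpace X] {C : Set X}
    (hC : IsPreconnected C) {g₁ g₂ : X → ℂ} (h₁ : ContinuousOn g₁ C) (h₂ : ContinuousOn g₂ C)
    {n : ℕ} (hn : n ≠ 0) (hpow : ∀ x ∈ C, g₁ x ^ n = g₂ x ^ n) (hne : ∀ x ∈ C, g₂ x ≠ 0)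
    {y : X} (hy : y ∈ C) (heq : g₁ y = g₂ y) : EqOn g₁ g₂ C := by
  have hroot : MapsTo (fun x => g₁ x / g₂ x) C (Polynomial.nthRootsFinset n (1 : ℂ)) :=
    fun x hx => by
      rw [Finset.mem_coe, Polynomial.mem_nthRootsFinset (Nat.pos_of_ne_zero hn), div_pow,
        hpow x hx, div_self (pow_ne_zero n (hne x hx))]
  intro x hx
  have hconst := hC.constant_of_mapsTo (Finset.finite_toSet _).isDiscrete (h₁.div h₂ hne) hroot
    hx hy
  rwa [Pi.div_apply, Pi.div_apply, heq, div_self (hne y hy), div_eq_one_iff_eq (hne x hx)]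
    at hconst

theorem IsPreconnected.subset_Ioi_of_notMem {α : Type*} [LinearOrder α] [TopologicalSpace α]
    [OrderClosedTopology α] {C : Set α} (hC : IsPreconnected C) {a x : α} (ha : a ∉ C)
    (hx : x ∈ C) (hax : a < x) : C ⊆ Ioi a := fun _ hy =>
  lt_of_not_ge fun hya => ha (hC.ordConnected.out hy hx ⟨hya, hax.le⟩)

def componentsIn {X : Type*} [TopologicalSpace X] (S : Set X) : Set (Set X) :=
  {C | ∃ x ∈ S, C = connectedComponentIn S x}

def posComponentsIn (S : Set ℝ) : Set (Set ℝ) :=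
  {C ∈ componentsIn S | C ⊆ Ioi 0}

section Symmetric

variable {S : Set ℝ}

theorem neg_connectedComponentIn (hS : -S = S) {x : ℝ} (hx : x ∈ S) :
    -connectedComponentIn S x = connectedComponentIn S (-x) := by
  have h := (Homeomorph.neg ℝ).image_connectedComponentIn hx
  rwa [Homeomorph.coe_neg, image_neg_eq_neg, image_neg_eq_neg, hS] at h

theorem componentsIn_eq_insert (hS : -S = S) (h0 : 0 ∈ S) :
    componentsIn S =
      insert (connectedComponentIn S 0) (posComponentsIn S ∪ -posComponentsIn S) := by
  ext C
  constructor
  · rintro ⟨x, hx, rfl⟩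
    by_cases hx0 : (0 : ℝ) ∈ connectedComponentIn S x
    · exact Or.inl (connectedComponentIn_eq hx0)
    have hxC := mem_connectedComponentIn hx
    rcases (ne_of_mem_of_not_mem hxC hx0).lt_or_gt with hneg | hpos
    · refine Or.inr (Or.inr ⟨⟨-x, by rwa [← hS, neg_mem_neg], neg_connectedComponentIn hS hx⟩, ?_⟩)
      rw [neg_connectedComponentIn hS hx]
      refine isPreconnected_connectedComponentIn.subset_Ioi_of_notMem ?_
        (mem_connectedComponentIn (by rwa [← hS, neg_mem_neg])) (neg_pos.2 hneg)
      rwa [← neg_connectedComponentIn hS hx, ← neg_zero, neg_mem_neg]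
    · exact Or.inr (Or.inl ⟨⟨x, hx, rfl⟩,
        isPreconnected_connectedComponentIn.subset_Ioi_of_notMem hx0 hxC hpos⟩)
  · rintro (rfl | ⟨hC, -⟩ | ⟨⟨y, hy, hCy⟩, -⟩)
    · exact ⟨0, h0, rfl⟩
    · exact hC
    · refine ⟨-y, by rwa [← hS, neg_mem_neg], ?_⟩
      rw [← neg_connectedComponentIn hS hy, ← hCy, neg_neg]

theorem ncard_componentsIn (hS : -S = S) (h0 : 0 ∈ S) (hfin : (componentsIn S).Finite) :
    (componentsIn S).ncard = 2 * (posComponentsIn S).ncard + 1 := by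
  have hPfin : (posComponentsIn S).Finite := hfin.subset (sep_subset _ _)
  have hdisj : Disjoint (posComponentsIn S) (-posComponentsIn S) := by
    refine disjoint_left.2 ?_
    rintro C ⟨⟨x, hx, hCx⟩, hpos⟩ ⟨-, hneg⟩
    have hxC : x ∈ C := hCx ▸ mem_connectedComponentIn hx
    exact (mem_Ioi.1 (hneg (neg_mem_neg.2 hxC))).not_gt (neg_lt_zero.2 (mem_Ioi.1 (hpos hxC)))
  have h0C : 0 ∈ connectedComponentIn S 0 := mem_connectedComponentIn h0
  have hnotMem : connectedComponentIn S 0 ∉ posComponentsIn S ∪ -posComponentsIn S := by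
    rintro (⟨-, hpos⟩ | ⟨-, hneg⟩)
    · exact lt_irrefl 0 (mem_Ioi.1 (hpos h0C))
    · exact lt_irrefl 0 (mem_Ioi.1 (hneg (mem_neg.2 (by rwa [neg_zero]))))
  rw [componentsIn_eq_insert hS h0, ncard_insert_of_notMem hnotMem (hPfin.union hPfin.neg),
    ncard_union_eq hdisj hPfin hPfin.neg, ncard_neg]
  ring

end Symmetric

theorem IsCharFun.eq_of_eqOn_Ici {g₁ g₂ : ℝ → ℂ} (hg₁ : IsCharFun g₁) (hg₂ : IsCharFun g₂)
    (h : EqOn g₁ g₂ (Ici 0)) : g₁ = g₂ := by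
  funext x
  rcases le_or_gt 0 x with hx | hx
  · exact h hx
  · rw [← neg_neg x, hg₁.map_neg, hg₂.map_neg, h (neg_nonneg.2 hx.le)]

theorem IsCharFun.eq_of_pow_eq_pow {f g₁ g₂ : ℝ → ℂ} {n : ℕ} (hn : n ≠ 0)
    (hg₁ : IsCharFun g₁) (hg₂ : IsCharFun g₂)
    (h₁ : ∀ x, g₁ x ^ n = f x ^ n) (h₂ : ∀ x, g₂ x ^ n = f x ^ n)
    (hP : ∀ C ∈ posComponentsIn {y | f y ≠ 0}, ∃ x ∈ C, g₁ x = g₂ x) : g₁ = g₂ := by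
  set S := {y | f y ≠ 0}
  have hzero : ∀ {g : ℝ → ℂ} {x}, g x ^ n = f x ^ n → (g x = 0 ↔ x ∉ S) := fun hg => by
    rw [← pow_eq_zero_iff hn, hg, pow_eq_zero_iff hn, mem_ofPred_eq, not_not]
  have hcomp : ∀ x ∈ S, ∀ y ∈ connectedComponentIn S x, g₁ y = g₂ y → g₁ x = g₂ x :=
    fun x hx y hy heq => isPreconnected_connectedComponentIn.eqOn_of_pow_eq_pow
      hg₁.continuous.continuousOn hg₂.continuous.continuousOn hn (fun z _ => by rw [h₁, h₂])
      (fun z hz => by rw [Ne, hzero (h₂ z), not_not]; exact connectedComponentIn_subset S x hz)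
      hy heq (mem_connectedComponentIn hx)
  refine hg₁.eq_of_eqOn_Ici hg₂ fun x (hx : 0 ≤ x) => ?_
  by_cases hxS : x ∉ S
  · rw [(hzero (h₁ x)).2 hxS, (hzero (h₂ x)).2 hxS]
  rw [not_not] at hxS
  have hxC := mem_connectedComponentIn hxS
  by_cases h0 : (0 : ℝ) ∈ connectedComponentIn S x
  · exact hcomp x hxS 0 h0 (by rw [hg₁.map_zero, hg₂.map_zero])
  · have hpos : 0 < x := hx.lt_of_ne (ne_of_mem_of_not_mem hxC h0).symm
    obtain ⟨y, hy, heq⟩ := hP _ ⟨⟨x, hxS, rfl⟩,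
      isPreconnected_connectedComponentIn.subset_Ioi_of_notMem h0 hxC hpos⟩
    exact hcomp x hxS y hy heq

theorem mk_charFun_pow_eq_pow_le {f : ℝ → ℂ} {n : ℕ} (hn : n ≠ 0)
    (hP : (posComponentsIn {y | f y ≠ 0}).Finite) :
    Cardinal.mk {g : ℝ → ℂ | IsCharFun g ∧ ∀ x, g x ^ n = f x ^ n} ≤
      ((n ^ (posComponentsIn {y | f y ≠ 0}).ncard : ℕ) : Cardinal) := by
  set P := posComponentsIn {y | f y ≠ 0}
  have : ∀ C : P, ∃ x ∈ (C : Set ℝ), f x ≠ 0 := fun ⟨_, ⟨x, hx, hCx⟩, _⟩ =>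
    ⟨x, hCx ▸ mem_connectedComponentIn hx, hx⟩
  choose pt hpt hfpt using this
  let ratio (g : {g : ℝ → ℂ | IsCharFun g ∧ ∀ x, g x ^ n = f x ^ n}) (C : P) :
      Polynomial.nthRootsFinset n (1 : ℂ) :=
    ⟨g.1 (pt C) / f (pt C), by
      rw [Polynomial.mem_nthRootsFinset (Nat.pos_of_ne_zero hn), div_pow, g.2.2,
        div_self (pow_ne_zero n (hfpt C))]⟩
  have hinj : Function.Injective ratio := fun g₁ g₂ h => Subtype.ext <|
    g₁.2.1.eq_of_pow_eq_pow hn g₂.2.1 g₁.2.2 g₂.2.2 fun C hC =>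
      ⟨pt ⟨C, hC⟩, hpt ⟨C, hC⟩,
        (div_left_inj' (hfpt _)).1 (congrArg Subtype.val (congrFun h ⟨C, hC⟩))⟩
  have := hP.to_subtype
  calc Cardinal.mk _ ≤ Cardinal.mk (P → Polynomial.nthRootsFinset n (1 : ℂ)) :=
        Cardinal.mk_le_of_injective hinj
    _ = ((Polynomial.nthRootsFinset n (1 : ℂ)).card ^ P.ncard : ℕ) := by
        rw [← Nat.cast_card, Nat.card_fun, Nat.card_coe_set_eq, Nat.card_eq_fintype_card,
          Fintype.card_coe]
    _ ≤ ((n ^ P.ncard : ℕ) : Cardinal) := by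
        exact_mod_cast Nat.pow_le_pow_left (Polynomial.card_nthRootsFinset_le n 1) _

theorem stmt6_general (f : ℝ → ℂ) (hf : IsCharFun f) (k n : ℕ) (hn : 2 ≤ n)
    (hcard : {C : Set ℝ | ∃ x : ℝ, f x ≠ 0 ∧
        C = connectedComponentIn {y : ℝ | f y ≠ 0} x}.ncard = 2 * k + 1) :
    Cardinal.mk {g : ℝ → ℂ | IsCharFun g ∧ ∀ x, g x ^ n = f x ^ n} ≤ ((n ^ k : ℕ) : Cardinal) := by
  set S := {y | f y ≠ 0}
  change (componentsIn S).ncard = 2 * k + 1 at hcard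
  have hS : -S = S := by ext x; simp [S, hf.map_neg]
  have h0 : 0 ∈ S := by simp [S, hf.map_zero]
  have hfin : (componentsIn S).Finite := finite_of_ncard_ne_zero (by omega)
  have hk : (posComponentsIn S).ncard = k := by
    have := ncard_componentsIn hS h0 hfin
    omega
  rw [← hk]
  exact mk_charFun_pow_eq_pow_le (by omega) (hfin.subset (sep_subset _ _))

/-- If the essential support of a characteristic function `f` has exactly `2k+1`
connected components, then `C_n(f)` has at most `n^k` elements. -/
theorem stmt6 (f : ℝ → ℂ) (hf : IsCharFun f) (k n : ℕ) (hn : 2 ≤ n)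
    (hfin : {C : Set ℝ | ∃ x : ℝ, f x ≠ 0 ∧ C = connectedComponentIn {y : ℝ | f y ≠ 0} x}.Finite)
    (hcard : {C : Set ℝ | ∃ x : ℝ, f x ≠ 0 ∧
        C = connectedComponentIn {y : ℝ | f y ≠ 0} x}.ncard = 2 * k + 1) :
    Cardinal.mk {g : ℝ → ℂ | IsCharFun g ∧ ∀ x, g x ^ n = f x ^ n} ≤ ((n ^ k : ℕ) : Cardinal) :=
  stmt6_general f hf k n hn hcard
end

section
/- For every integer n ≥ 2 there exist two distinct characteristic functions f and g of probability measures on ℝ such that f(x)^n = g(x)^n for all x ∈ ℝ. -/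
open MeasureTheory Set

/-!
The triangle function `triangle x = max 0 (1 - |x|)` is a characteristic function: its Fourier
transform is the nonnegative integrable Fejér kernel, so Fourier inversion exhibits it as the
characteristic function of an absolutely continuous law. Reweighting a law with characteristic
function `f` by the density `1 + Re (w e^{iat})`, `‖w‖ ≤ 1`, produces the characteristic
function `f x + w/2 f (x + a) + w̄/2 f (x - a)`, of total mass one as soon as `f a = 0`.
For `a = 2` the three translates of `triangle` have disjoint supports, so the `n`-th power of
the result depends only on `w ^ n`; `w = 1` and `w` a primitive `n`-th root of unity give the
two characteristic functions.
-/

open Complex FourierTransform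
open scoped Real ComplexConjugate

lemma charFunOf_eq_charFun (μ : Measure ℝ) : charFunOf μ = charFun μ :=
  funext fun x => (charFun_apply_real x).symm

lemma isCharFun_iff {f : ℝ → ℂ} :
    IsCharFun f ↔ ∃ μ : Measure ℝ, IsProbabilityMeasure μ ∧ charFun μ = f := by
  simp only [IsCharFun, charFunOf_eq_charFun, eq_comm]

lemma isProbabilityMeasure_of_charFun_zero {E : Type*} [SeminormedAddCommGroup E]
    [InnerProductSpace ℝ E] [MeasurableSpace E] {μ : Measure E} [IsFiniteMeasure μ]
    (h : charFun μ 0 = 1) : IsProbabilityMeasure μ := by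
  rw [charFun_zero, ofReal_eq_one, measureReal_def, ENNReal.toReal_eq_one_iff] at h
  exact ⟨h⟩

theorem isCharFun_of_fourier_ae_eq {φ : ℝ → ℂ} {ρ : ℝ → ℝ} (hφ : Continuous φ)
    (hφi : Integrable φ) (hρ : ∀ ξ, 0 ≤ ρ ξ) (hρi : Integrable ρ)
    (hF : 𝓕 φ =ᵐ[volume] fun ξ => (ρ ξ : ℂ)) (h0 : φ 0 = 1) : IsCharFun φ := by
  have hinv (x : ℝ) : φ x = 𝓕 (fun ξ => (ρ ξ : ℂ)) (-x) := by
    rw [← Real.fourier_congr_ae hF, ← Real.fourierInv_eq_fourier_neg,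
      hφ.fourierInv_fourier_eq hφi (hρi.ofReal.congr hF.symm)]
  have := isFiniteMeasure_withDensity_ofReal hρi.2
  set ν := (volume.withDensity fun ξ => ENNReal.ofReal (ρ ξ)).map (2 * π * ·)
  have hν : charFun ν = φ := by
    ext x
    rw [charFun_map_mul, charFun_apply_real, integral_withDensity_eq_integral_toReal_smul₀
      hρi.1.aemeasurable.ennreal_ofReal (ae_of_all _ fun _ => ENNReal.ofReal_lt_top), hinv,
      Real.fourier_real_eq_integral_exp_smul]
    congr 1 with ξ
    rw [ENNReal.toReal_ofReal (hρ ξ), real_smul, smul_eq_mul]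
    push_cast
    ring_nf
  exact isCharFun_iff.2 ⟨ν, isProbabilityMeasure_of_charFun_zero (by rw [hν, h0]), hν⟩

lemma integrable_cexp_mul_I (μ : Measure ℝ) [IsFiniteMeasure μ] (s : ℝ) :
    Integrable (fun t : ℝ => cexp (s * t * I)) μ :=
  .of_bound (by fun_prop) 1 (ae_of_all _ fun t => by rw [← ofReal_mul, norm_exp_ofReal_mul_I])

theorem IsCharFun.modulate {f : ℝ → ℂ} (hf : IsCharFun f) {w : ℂ} (hw : ‖w‖ ≤ 1) {a : ℝ}
    (ha : f a = 0) : IsCharFun fun x => f x + w / 2 * f (x + a) + conj w / 2 * f (x - a) := by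
  obtain ⟨μ, hμ, rfl⟩ := isCharFun_iff.1 hf
  set d : ℝ → ℝ := fun t => 1 + (w * cexp (a * t * I)).re
  have hd_bound (t : ℝ) : |(w * cexp (a * t * I)).re| ≤ 1 :=
    (abs_re_le_norm _).trans (by rwa [norm_mul, ← ofReal_mul, norm_exp_ofReal_mul_I, mul_one])
  have hd_nonneg (t : ℝ) : 0 ≤ d t := by linarith [(abs_le.1 (hd_bound t)).1]
  have hd_smul (x t : ℝ) : d t • cexp (x * t * I) =
      cexp (x * t * I) + w / 2 * cexp ((x + a : ℝ) * t * I)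
        + conj w / 2 * cexp ((x - a : ℝ) * t * I) := by
    have h_add : cexp ((x + a : ℝ) * t * I) = cexp (x * t * I) * cexp (a * t * I) := by
      rw [← exp_add]; push_cast; ring_nf
    have h_sub : cexp ((x - a : ℝ) * t * I) = cexp (x * t * I) * cexp (a * t * -I) := by
      rw [← exp_add]; push_cast; ring_nf
    rw [h_add, h_sub]
    simp only [d, real_smul, ofReal_add, ofReal_one, re_eq_add_conj, map_mul, ← exp_conj,
      conj_ofReal, conj_I]
    ring
  have hd_meas : Measurable d := by fun_prop
  have := isFiniteMeasure_withDensity_ofReal (μ := μ)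
    (Integrable.of_bound hd_meas.aestronglyMeasurable 2 (ae_of_all _ fun t => by
      rw [Real.norm_of_nonneg (hd_nonneg t)]; linarith [(abs_le.1 (hd_bound t)).2])).2
  set ν := μ.withDensity fun t => ENNReal.ofReal (d t)
  have hν : charFun ν = fun x => charFun μ x + w / 2 * charFun μ (x + a)
      + conj w / 2 * charFun μ (x - a) := by
    ext x
    simp only [charFun_apply_real]
    rw [integral_withDensity_eq_integral_toReal_smul hd_meas.ennreal_ofReal
      (ae_of_all _ fun _ => ENNReal.ofReal_lt_top)]
    simp only [ENNReal.toReal_ofReal (hd_nonneg _), hd_smul]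
    have := integrable_cexp_mul_I μ
    rw [integral_add, integral_add, integral_const_mul, integral_const_mul]
    exacts [this x, (this _).const_mul _, (this x).add ((this _).const_mul _),
      (this _).const_mul _]
  refine isCharFun_iff.2 ⟨ν, isProbabilityMeasure_of_charFun_zero ?_, hν⟩
  rw [hν]
  simp [charFun_neg, ha]

def triangle (x : ℝ) : ℝ := max 0 (1 - |x|)

lemma triangle_eq_zero_of_one_le_abs {x : ℝ} (hx : 1 ≤ |x|) : triangle x = 0 :=
  max_eq_left (by linarith)

lemma triangle_of_abs_le_one {x : ℝ} (hx : |x| ≤ 1) : triangle x = 1 - |x| :=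
  max_eq_right (by linarith)

lemma triangle_zero : triangle 0 = 1 := by
  simp [triangle]

lemma triangle_neg (x : ℝ) : triangle (-x) = triangle x := by
  rw [triangle, abs_neg, triangle]

@[fun_prop]
lemma continuous_triangle : Continuous triangle := by
  unfold triangle; fun_prop

lemma support_triangle_subset : Function.support triangle ⊆ Ioc (-1) 1 := fun x hx => by
  by_contra h
  simp only [mem_Ioc, not_and, not_le] at h
  refine hx (triangle_eq_zero_of_one_le_abs ?_)
  rcases le_or_gt x (-1) with h' | h'
  · exact le_abs.2 (Or.inr (by linarith))
  · exact le_abs.2 (Or.inl (h h').le)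

lemma triangle_eq_zero_or_triangle_eq_zero {x y : ℝ} (h : 2 ≤ |x - y|) :
    triangle x = 0 ∨ triangle y = 0 := by
  by_contra! hxy
  have hx : |x| < 1 := not_le.1 fun hx => hxy.1 (triangle_eq_zero_of_one_le_abs hx)
  have hy : |y| < 1 := not_le.1 fun hy => hxy.2 (triangle_eq_zero_of_one_le_abs hy)
  linarith [abs_sub x y]

lemma integrable_ofReal_triangle : Integrable fun x => (triangle x : ℂ) :=
  (continuous_ofReal.comp continuous_triangle).integrable_of_hasCompactSupport
    (HasCompactSupport.comp_left (isCompact_Icc.of_isClosed_subset isClosed_closure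
      (closure_minimal (support_triangle_subset.trans Ioc_subset_Icc_self) isClosed_Icc))
      ofReal_zero)

lemma integral_one_sub_mul_cexp {c : ℂ} (hc : c ≠ 0) :
    ∫ v in (0 : ℝ)..1, (1 - v) * cexp (c * v) = (cexp c - 1 - c) / c ^ 2 := by
  have hderiv (v : ℝ) : HasDerivAt (fun v : ℝ => ((1 - v) / c + 1 / c ^ 2) * cexp (c * v))
      ((1 - v) * cexp (c * v)) v := by
    have := ((((hasDerivAt_id' (v : ℂ)).const_sub 1).div_const c).add_const
      (1 / c ^ 2)).fun_mul ((hasDerivAt_id' (v : ℂ)).const_mul c).cexp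
    convert this.comp_ofReal using 1
    field_simp
    ring
  rw [intervalIntegral.integral_eq_sub_of_hasDerivAt (fun v _ => hderiv v)
    ((by fun_prop : Continuous fun v : ℝ => (1 - (v : ℂ)) * cexp (c * v)).intervalIntegrable _ _)]
  push_cast
  rw [mul_zero, exp_zero]
  field_simp
  ring

-- The junk value `0` at `ξ = 0` is harmless: the kernel is only compared with `𝓕 triangle` a.e.
noncomputable def fejerKernel (ξ : ℝ) : ℝ :=
  (1 - Real.cos (2 * π * ξ)) / (2 * π ^ 2 * ξ ^ 2)

lemma fourier_triangle {ξ : ℝ} (hξ : ξ ≠ 0) :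
    𝓕 (fun x => (triangle x : ℂ)) ξ = fejerKernel ξ := by
  set c : ℂ := 2 * π * ξ * I
  have hc : c ≠ 0 := by simp [c, hξ, Real.pi_ne_zero]
  set g : ℝ → ℂ := fun v => cexp (-c * v) * triangle v
  have hg : Continuous g := by simp only [g]; fun_prop
  have h_half {c' : ℂ} (hc' : c' ≠ 0) :
      ∫ v in (0 : ℝ)..1, cexp (c' * v) * triangle v = (cexp c' - 1 - c') / c' ^ 2 := by
    rw [← integral_one_sub_mul_cexp hc']
    refine intervalIntegral.integral_congr fun v hv => ?_
    rw [uIcc_of_le zero_le_one] at hv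
    rw [triangle_of_abs_le_one (abs_le.2 ⟨by linarith [hv.1], hv.2⟩), abs_of_nonneg hv.1]
    push_cast
    ring
  have h_symm : ∫ v in (-1 : ℝ)..0, g v = ∫ v in (0 : ℝ)..1, cexp (c * v) * triangle v := by
    have := intervalIntegral.integral_comp_neg (a := 0) (b := 1) g
    rw [neg_zero] at this
    rw [← this]
    congr 1 with v
    simp only [g, triangle_neg, ofReal_neg]
    ring_nf
  calc 𝓕 (fun x => (triangle x : ℂ)) ξ = ∫ v in (-1 : ℝ)..1, g v := by
        rw [Real.fourier_real_eq_integral_exp_smul,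
          intervalIntegral.integral_eq_integral_of_support_subset]
        · congr 1 with v
          simp only [g, c, smul_eq_mul]
          push_cast
          ring_nf
        · exact (Function.support_mul_subset_right _ _).trans
            ((Function.support_comp_subset ofReal_zero _).trans support_triangle_subset)
    _ = (cexp c + cexp (-c) - 2) / c ^ 2 := by
        rw [← intervalIntegral.integral_add_adjacent_intervals (b := 0)
          (hg.intervalIntegrable _ _) (hg.intervalIntegrable _ _), h_symm, h_half hc]
        simp only [g]
        rw [h_half (neg_ne_zero.2 hc)]
        ring
    _ = fejerKernel ξ := by
        rw [show cexp c + cexp (-c) = 2 * cos (2 * π * ξ) by rw [two_cos, neg_mul]]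
        simp only [fejerKernel, c]
        push_cast
        field_simp
        rw [I_sq]
        ring

lemma fejerKernel_nonneg (ξ : ℝ) : 0 ≤ fejerKernel ξ :=
  div_nonneg (sub_nonneg.2 (Real.cos_le_one _)) (by positivity)

lemma fejerKernel_le_one (ξ : ℝ) : fejerKernel ξ ≤ 1 := by
  rcases eq_or_ne ξ 0 with rfl | hξ
  · simp [fejerKernel]
  refine div_le_one_of_le₀ ?_ (by positivity)
  linarith [Real.one_sub_sq_div_two_le_cos (x := 2 * π * ξ)]

lemma fejerKernel_mul_sq_le_one (ξ : ℝ) : fejerKernel ξ * ξ ^ 2 ≤ 1 := by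
  rcases eq_or_ne ξ 0 with rfl | hξ
  · simp [fejerKernel]
  have hπ : 1 ≤ π ^ 2 := by nlinarith [Real.pi_gt_three]
  rw [fejerKernel, div_mul_eq_mul_div, div_le_one (by positivity)]
  nlinarith [Real.neg_one_le_cos (2 * π * ξ), sq_nonneg ξ]

lemma integrable_fejerKernel : Integrable fejerKernel := by
  refine (integrable_inv_one_add_sq.const_mul 2).mono'
    (by unfold fejerKernel; fun_prop : Measurable fejerKernel).aestronglyMeasurable
    (ae_of_all _ fun ξ => ?_)
  rw [Real.norm_of_nonneg (fejerKernel_nonneg ξ), ← div_eq_mul_inv, le_div_iff₀ (by positivity)]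
  linarith [fejerKernel_le_one ξ, fejerKernel_mul_sq_le_one ξ]

theorem isCharFun_triangle : IsCharFun fun x => (triangle x : ℂ) :=
  isCharFun_of_fourier_ae_eq (by fun_prop) integrable_ofReal_triangle fejerKernel_nonneg
    integrable_fejerKernel ((Measure.ae_ne volume 0).mono fun _ => fourier_triangle)
    (by simp [triangle_zero])

noncomputable def modulatedTriangle (w : ℂ) (x : ℝ) : ℂ :=
  triangle x + w / 2 * triangle (x + 2) + conj w / 2 * triangle (x - 2)

lemma isCharFun_modulatedTriangle {w : ℂ} (hw : ‖w‖ ≤ 1) : IsCharFun (modulatedTriangle w) :=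
  isCharFun_triangle.modulate hw (a := 2) (by simp [triangle_eq_zero_of_one_le_abs])

lemma modulatedTriangle_neg_two (w : ℂ) : modulatedTriangle w (-2) = w / 2 := by
  norm_num [modulatedTriangle, triangle_eq_zero_of_one_le_abs, triangle_zero]

lemma modulatedTriangle_injective : Function.Injective modulatedTriangle := fun w w' h => by
  simpa [modulatedTriangle_neg_two] using congrFun h (-2)

lemma modulatedTriangle_pow_eq {w w' : ℂ} {n : ℕ} (h : w ^ n = w' ^ n) (x : ℝ) :
    modulatedTriangle w x ^ n = modulatedTriangle w' x ^ n := by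
  have h' : conj w ^ n = conj w' ^ n := by rw [← map_pow, h, map_pow]
  rcases triangle_eq_zero_or_triangle_eq_zero (x := x) (y := x + 2) (by simp) with h₁ | h₁ <;>
  rcases triangle_eq_zero_or_triangle_eq_zero (x := x) (y := x - 2) (by simp) with h₂ | h₂ <;>
  rcases triangle_eq_zero_or_triangle_eq_zero (x := x + 2) (y := x - 2) (by norm_num)
    with h₃ | h₃ <;>
  simp [modulatedTriangle, h₁, h₂, h₃, mul_pow, div_pow, h, h']

/-- For every integer `n ≥ 2` there exist two distinct characteristic functions
`f, g` with `f^n = g^n`. -/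
theorem stmt15 (n : ℕ) (hn : 2 ≤ n) :
    ∃ f g : ℝ → ℂ, IsCharFun f ∧ IsCharFun g ∧ f ≠ g ∧ ∀ x, f x ^ n = g x ^ n := by
  have hω := Complex.isPrimitiveRoot_exp n (by omega)
  refine ⟨modulatedTriangle 1, modulatedTriangle _, isCharFun_modulatedTriangle (by simp),
    isCharFun_modulatedTriangle (hω.norm'_eq_one (by omega)).le,
    fun h => hω.ne_one (by omega) (modulatedTriangle_injective h).symm,
    modulatedTriangle_pow_eq (by rw [one_pow, hω.pow_eq_one])⟩
end

section
/- Let f be the 2-periodic function with f(x) = 1 - |x| for |x| ≤ 1, and let g be the 4-periodic function with g(x) = 1 - |x| for |x| ≤ 2. Then f and g are characteristic functions of probability measures on ℝ, f ≠ g, and |f(x)| = |g(x)| for all x ∈ ℝ; consequently f^{2k} = g^{2k} for every positive integer k. -/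
open MeasureTheory Set

open Real in
private lemma sAll17 {x : ℝ} (hx : x ∈ Icc (0:ℝ) 1) :
    HasSum (fun n : ℕ => 1 / (n : ℝ) ^ 2 * Real.cos (2 * π * n * x))
      (π ^ 2 * (x ^ 2 - x + 1 / 6)) := by
  have h := hasSum_one_div_nat_pow_mul_cos (k := 1) one_ne_zero hx
  have hb : (Polynomial.map (algebraMap ℚ ℝ) (Polynomial.bernoulli 2)).eval x
      = x ^ 2 - x + 1 / 6 := by
    simp [Polynomial.bernoulli, Finset.sum_range_succ, bernoulli_zero, bernoulli_one,
      bernoulli, bernoulli'_two]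
    ring
  norm_num [hb, Nat.factorial] at h
  simp only [one_div]
  convert h using 1
  ring

private lemma summableOdd17 : Summable (fun n : ℕ => 1 / ((2 * (n:ℝ) + 1)) ^ 2) := by
  have h1 : Summable (fun m : ℕ => 1 / (m : ℝ) ^ 2) :=
    Real.summable_one_div_nat_pow.mpr one_lt_two
  have h2 := h1.comp_injective (i := fun n : ℕ => 2 * n + 1)
    (fun a b hab => by dsimp at hab; omega)
  refine h2.congr fun n => ?_
  simp [Function.comp]

open Real in
private lemma sOdd17 {x : ℝ} (hx : x ∈ Icc (0:ℝ) 1) :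
    HasSum (fun n : ℕ => 1 / (2 * (n:ℝ) + 1) ^ 2 * Real.cos ((2 * n + 1) * π * x))
      (π ^ 2 / 8 - π ^ 2 * x / 4) := by
  set t : ℕ → ℝ := fun m => 1 / (m : ℝ) ^ 2 * Real.cos (2 * π * m * (x / 2)) with ht
  have hx2 : x / 2 ∈ Icc (0:ℝ) 1 := ⟨by linarith [hx.1], by linarith [hx.2]⟩
  have hall : HasSum t (π ^ 2 * ((x/2) ^ 2 - x/2 + 1/6)) := sAll17 hx2
  have heven : HasSum (fun n => t (2 * n)) ((1/4) * (π ^ 2 * (x ^ 2 - x + 1/6))) := by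
    have := (sAll17 hx).mul_left (1/4)
    refine this.congr_fun fun n => ?_
    simp only [ht]
    push_cast
    rw [show 2 * π * (2 * (n:ℝ)) * (x / 2) = 2 * π * n * x by ring]
    ring
  have hsodd : Summable (fun n : ℕ => t (2 * n + 1)) := by
    refine Summable.of_norm_bounded summableOdd17 fun n => ?_
    simp only [ht, norm_mul]
    push_cast
    calc ‖1 / ((2*(n:ℝ)+1)) ^ 2‖ * ‖Real.cos (2 * π * (2*n+1) * (x/2))‖
        ≤ 1 / ((2*(n:ℝ)+1)) ^ 2 * 1 := by
          gcongr
          · rw [norm_of_nonneg (by positivity)]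
          · exact abs_cos_le_one _
      _ = 1 / ((2*(n:ℝ)+1)) ^ 2 := mul_one _
  have hodd := hsodd.hasSum
  have hcomb := HasSum.even_add_odd heven hodd
  have heq : (1/4) * (π ^ 2 * (x ^ 2 - x + 1/6)) + ∑' n, t (2*n+1)
      = π ^ 2 * ((x/2) ^ 2 - x/2 + 1/6) := hcomb.unique hall
  have hval : ∑' n, t (2*n+1) = π ^ 2 / 8 - π ^ 2 * x / 4 := by linarith
  rw [hval] at hodd
  refine hodd.congr_fun fun n => ?_
  simp only [ht]
  push_cast
  ring_nf

noncomputable def symMeasure17 (w0 : ℝ) (c : ℕ → ℝ) (a : ℕ → ℝ) : Measure ℝ :=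
  ENNReal.ofReal w0 • Measure.dirac 0 +
    Measure.sum fun n => ENNReal.ofReal (c n) • (Measure.dirac (a n) + Measure.dirac (-(a n)))

private lemma symMeasure17_univ (w0 : ℝ) (hw0 : 0 ≤ w0) (c a : ℕ → ℝ) (hc : ∀ n, 0 ≤ c n)
    (hcs : Summable c) :
    symMeasure17 w0 c a Set.univ = ENNReal.ofReal (w0 + ∑' n, 2 * c n) := by
  have h2 : Summable fun n => 2 * c n := hcs.mul_left 2
  rw [ENNReal.ofReal_add hw0 (tsum_nonneg fun n => by linarith [hc n]),
    ENNReal.ofReal_tsum_of_nonneg (fun n => by linarith [hc n]) h2]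
  simp [symMeasure17, Measure.sum_apply, ENNReal.ofReal_mul, two_mul,
    ENNReal.ofReal_add (hc _) (hc _), mul_add, mul_one]

private lemma integrable_cexp17 (μ : Measure ℝ) [IsFiniteMeasure μ] (x : ℝ) :
    Integrable (fun t : ℝ => Complex.exp (x * t * Complex.I)) μ := by
  have hcont : Continuous fun t : ℝ => Complex.exp (x * t * Complex.I) := by
    fun_prop
  refine (integrable_const (1:ℝ)).mono' hcont.aestronglyMeasurable (ae_of_all _ fun t => ?_)
  simp [Complex.norm_exp]

private lemma charFun_symMeasure17 (w0 : ℝ) (hw0 : 0 ≤ w0) (c a : ℕ → ℝ) (hc : ∀ n, 0 ≤ c n)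
    (hcs : Summable c) (x : ℝ) {S : ℝ}
    (hS : HasSum (fun n => 2 * c n * Real.cos (x * a n)) S) :
    charFunOf (symMeasure17 w0 c a) x = ((w0 + S : ℝ) : ℂ) := by
  have hfin : IsFiniteMeasure (symMeasure17 w0 c a) := by
    constructor
    rw [symMeasure17_univ w0 hw0 c a hc hcs]
    exact ENNReal.ofReal_lt_top
  set h : ℝ → ℂ := fun t => Complex.exp (x * t * Complex.I) with hh
  have hint : Integrable h (symMeasure17 w0 c a) := integrable_cexp17 _ x
  rw [symMeasure17] at hint
  rw [integrable_add_measure] at hint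
  have key : ∀ b : ℝ, h b + h (-b) = ((2 * Real.cos (x * b) : ℝ) : ℂ) := by
    intro b
    simp only [hh]
    rw [show (x:ℂ) * ((b:ℝ):ℂ) * Complex.I = ((x*b : ℝ) : ℂ) * Complex.I by push_cast; ring,
      show (x:ℂ) * ((-b:ℝ):ℂ) * Complex.I = ((-(x*b) : ℝ) : ℂ) * Complex.I by push_cast; ring,
      Complex.exp_mul_I, Complex.exp_mul_I]
    simp only [← Complex.ofReal_cos, ← Complex.ofReal_sin, Real.cos_neg, Real.sin_neg]
    push_cast
    ring
  have hterm : ∀ n, ∫ t, h t ∂(ENNReal.ofReal (c n) •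
      (Measure.dirac (a n) + Measure.dirac (-(a n))))
      = ((2 * c n * Real.cos (x * a n) : ℝ) : ℂ) := by
    intro n
    rw [integral_smul_measure,
      integral_add_measure (integrable_cexp17 _ x) (integrable_cexp17 _ x),
      integral_dirac, integral_dirac, ENNReal.toReal_ofReal (hc n)]
    have hk := key (a n)
    simp only [hh] at hk
    rw [Complex.real_smul, hk]
    push_cast
    ring
  have hsum : HasSum (fun n => ((2 * c n * Real.cos (x * a n) : ℝ) : ℂ)) ((S:ℝ):ℂ) :=
    Complex.ofRealCLM.hasSum hS
  show (∫ t, h t ∂symMeasure17 w0 c a) = _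
  rw [symMeasure17, integral_add_measure hint.1 hint.2, integral_smul_measure,
    integral_dirac, integral_sum_measure hint.2, tsum_congr hterm, hsum.tsum_eq,
    ENNReal.toReal_ofReal hw0]
  simp only [hh]
  push_cast
  simp [Complex.real_smul]

private lemma reduce17 (c x : ℝ) (hc : 0 < c) :
    ∃ (y : ℝ) (k : ℤ) (ε : ℝ), (ε = 1 ∨ ε = -1) ∧ y ∈ Icc 0 c ∧ x = 2*c*k + ε*y := by
  have h2c : (0:ℝ) < 2*c := by linarith
  set k : ℤ := ⌊x / (2*c)⌋ with hk
  have h1 : (k:ℝ) ≤ x / (2*c) := Int.floor_le _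
  have h2 : x / (2*c) < k + 1 := Int.lt_floor_add_one _
  have ht0 : 2*c*k ≤ x := by
    have := mul_le_mul_of_nonneg_left h1 (le_of_lt h2c)
    rwa [mul_div_cancel₀ _ (ne_of_gt h2c)] at this
  have ht1 : x < 2*c*(k+1) := by
    have := mul_lt_mul_of_pos_left h2 h2c
    rwa [mul_div_cancel₀ _ (ne_of_gt h2c)] at this
  set t := x - 2*c*k with htdef
  by_cases h : t ≤ c
  · exact ⟨t, k, 1, Or.inl rfl, ⟨by linarith, h⟩, by simp only [htdef]; ring⟩
  · refine ⟨2*c - t, k+1, -1, Or.inr rfl, ⟨by linarith, by linarith⟩, ?_⟩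
    push_cast
    simp only [htdef]
    ring

/-- The 2-periodic and 4-periodic triangular waves `f, g` (with `f x = 1 - |x|` on
`[-1,1]`, `g x = 1 - |x|` on `[-2,2]`) are characteristic functions, are distinct,
satisfy `|f| = |g|` pointwise, and hence `f^{2k} = g^{2k}` for every `k ≥ 1`. -/
theorem stmt17 (f g : ℝ → ℝ)
    (hfper : Function.Periodic f 2) (hf : ∀ x : ℝ, |x| ≤ 1 → f x = 1 - |x|)
    (hgper : Function.Periodic g 4) (hg : ∀ x : ℝ, |x| ≤ 2 → g x = 1 - |x|) :
    IsCharFun (fun x => (f x : ℂ)) ∧ IsCharFun (fun x => (g x : ℂ)) ∧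
      f ≠ g ∧ (∀ x, |f x| = |g x|) ∧
      ∀ k : ℕ, 0 < k → ∀ x, f x ^ (2 * k) = g x ^ (2 * k) := by
  have hπ : (Real.pi : ℝ) ≠ 0 := Real.pi_ne_zero
  -- coefficients
  set cf : ℕ → ℝ := fun n => 2 / Real.pi ^ 2 * (1 / (2 * (n:ℝ) + 1) ^ 2) with hcf
  set cg : ℕ → ℝ := fun n => 4 / Real.pi ^ 2 * (1 / (2 * (n:ℝ) + 1) ^ 2) with hcg
  have hcf0 : ∀ n, 0 ≤ cf n := fun n => by positivity
  have hcg0 : ∀ n, 0 ≤ cg n := fun n => by positivity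
  have hcfs : Summable cf := summableOdd17.mul_left _
  have hcgs : Summable cg := summableOdd17.mul_left _
  -- total masses
  have hmass : ∀ (A : ℝ) (V : ℝ), (HasSum (fun n : ℕ =>
      A * (1 / (2*(n:ℝ)+1)^2)) (A * (Real.pi ^ 2 / 8)) ) := by
    intro A V
    have := (sOdd17 (x := 0) (by norm_num)).mul_left A
    simpa using this
  -- |f| = |g| pointwise
  have habs : ∀ x, |f x| = |g x| := by
    intro x
    obtain ⟨y, k, ε, hε, hy, hxeq⟩ := reduce17 2 x (by norm_num)
    have hgx : g x = 1 - y := by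
      have h4 : x - (k:ℝ) * 4 = ε * y := by rw [hxeq]; ring
      have := hgper.sub_int_mul_eq (x := x) k
      rw [h4] at this
      rw [← this, hg (ε*y) (by rcases hε with h|h <;>
        simp [h, abs_of_nonneg hy.1, hy.2] <;> linarith [hy.1, hy.2])]
      rcases hε with h|h <;> simp [h, abs_of_nonneg hy.1]
    have hfx : f x = 1 - y ∨ f x = y - 1 := by
      have h4 : x - ((2*k : ℤ):ℝ) * 2 = ε * y := by rw [hxeq]; push_cast; ring
      have hfε : f x = f (ε * y) := by
        have := hfper.sub_int_mul_eq (x := x) (2*k)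
        rw [h4] at this
        exact this.symm
      by_cases hy1 : y ≤ 1
      · left
        rw [hfε, hf (ε*y) (by rcases hε with h|h <;> simp [h, abs_of_nonneg hy.1] <;> linarith)]
        rcases hε with h|h <;> simp [h, abs_of_nonneg hy.1]
      · right
        rcases hε with h|h
        · have h2 : f ((y-2) + 2) = f (y-2) := hfper (y-2)
          have h3 : f (y-2) = 1 - |y-2| := hf _ (by rw [abs_le]; constructor <;> linarith [hy.2])
          rw [hfε, h, one_mul, show y = (y-2)+2 by ring, h2, h3,
            abs_of_nonpos (by linarith [hy.1, hy.2])]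
          ring
        · have h2 : f ((-y) + 2) = f (-y) := hfper (-y)
          have h3 : f (2-y) = 1 - |2-y| := hf _ (by rw [abs_le]; constructor <;> linarith [hy.2])
          rw [hfε, h, neg_one_mul, ← h2, show (-y)+2 = 2-y by ring, h3,
            abs_of_nonneg (by linarith [hy.2])]
          ring
    rw [hgx]
    rcases hfx with h|h
    · rw [h]
    · rw [h]
      exact abs_sub_comm y 1
  -- value of f on reduced points
  have hfval : ∀ x : ℝ, ∃ (y : ℝ) (k : ℤ) (ε : ℝ), (ε = 1 ∨ ε = -1) ∧ y ∈ Icc (0:ℝ) 1 ∧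
      x = 2*k + ε*y ∧ f x = 1 - y := by
    intro x
    obtain ⟨y, k, ε, hε, hy, hxeq⟩ := reduce17 1 x (by norm_num)
    refine ⟨y, k, ε, hε, hy, by rw [hxeq]; ring, ?_⟩
    have h4 : x - (k:ℝ) * 2 = ε * y := by rw [hxeq]; ring
    have := hfper.sub_int_mul_eq (x := x) k
    rw [h4] at this
    rw [← this, hf (ε*y) (by rcases hε with h|h <;> simp [h, abs_of_nonneg hy.1] <;>
      linarith [hy.2])]
    rcases hε with h|h <;> simp [h, abs_of_nonneg hy.1]
  have hgval : ∀ x : ℝ, ∃ (y : ℝ) (k : ℤ) (ε : ℝ), (ε = 1 ∨ ε = -1) ∧ y ∈ Icc (0:ℝ) 2 ∧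
      x = 4*k + ε*y ∧ g x = 1 - y := by
    intro x
    obtain ⟨y, k, ε, hε, hy, hxeq⟩ := reduce17 2 x (by norm_num)
    refine ⟨y, k, ε, hε, hy, by rw [hxeq]; ring, ?_⟩
    have h4 : x - (k:ℝ) * 4 = ε * y := by rw [hxeq]; ring
    have := hgper.sub_int_mul_eq (x := x) k
    rw [h4] at this
    rw [← this, hg (ε*y) (by rcases hε with h|h <;> simp [h, abs_of_nonneg hy.1] <;>
      linarith [hy.2])]
    rcases hε with h|h <;> simp [h, abs_of_nonneg hy.1]
  refine ⟨?_, ?_, ?_, habs, ?_⟩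
  · -- f is a char fun
    refine ⟨symMeasure17 (1/2) cf (fun n => (2*(n:ℝ)+1) * Real.pi), ?_, ?_⟩
    · constructor
      rw [symMeasure17_univ _ (by norm_num) _ _ hcf0 hcfs]
      have h1 : HasSum (fun n => 2 * cf n) (1/2 : ℝ) := by
        have := hmass (4 / Real.pi ^ 2) 0
        have h2 : (4 / Real.pi ^ 2) * (Real.pi ^ 2 / 8) = (1/2 : ℝ) := by
          field_simp; ring
        rw [h2] at this
        refine this.congr_fun fun n => ?_
        simp only [hcf]; ring
      rw [h1.tsum_eq]
      norm_num
    · funext x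
      obtain ⟨y, k, ε, hε, hy, hxeq, hfx⟩ := hfval x
      have hcos : ∀ n : ℕ, Real.cos (x * ((2*(n:ℝ)+1) * Real.pi))
          = Real.cos ((2*(n:ℝ)+1) * Real.pi * y) := by
        intro n
        have harg : x * ((2*(n:ℝ)+1) * Real.pi)
            = ε * ((2*(n:ℝ)+1) * Real.pi * y) + ((k*(2*(n:ℤ)+1) : ℤ) : ℝ) * (2*Real.pi) := by
          rw [hxeq]; push_cast; ring
        rw [harg]
        rcases hε with h|h
        · rw [h, one_mul, Real.cos_add_int_mul_two_pi]
        · rw [h, show (-1 : ℝ) * ((2*(n:ℝ)+1) * Real.pi * y)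
              = -((2*(n:ℝ)+1) * Real.pi * y) by ring,
            Real.cos_add_int_mul_two_pi, Real.cos_neg]
      have hS : HasSum (fun n => 2 * cf n * Real.cos (x * ((2*(n:ℝ)+1) * Real.pi)))
          (1/2 - y) := by
        have h0 := (sOdd17 hy).mul_left (4 / Real.pi ^ 2)
        have hval : (4 / Real.pi ^ 2) * (Real.pi ^ 2 / 8 - Real.pi ^ 2 * y / 4)
            = 1/2 - y := by field_simp; ring
        rw [hval] at h0
        refine h0.congr_fun fun n => ?_
        rw [hcos n]
        simp only [hcf]
        push_cast
        ring
      rw [charFun_symMeasure17 _ (by norm_num) _ _ hcf0 hcfs x hS, hfx]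
      push_cast
      ring
  · -- g is a char fun
    refine ⟨symMeasure17 0 cg (fun n => (2*(n:ℝ)+1) * Real.pi / 2), ?_, ?_⟩
    · constructor
      rw [symMeasure17_univ _ le_rfl _ _ hcg0 hcgs]
      have h1 : HasSum (fun n => 2 * cg n) (1 : ℝ) := by
        have := hmass (8 / Real.pi ^ 2) 0
        have h2 : (8 / Real.pi ^ 2) * (Real.pi ^ 2 / 8) = (1 : ℝ) := by
          field_simp
        rw [h2] at this
        refine this.congr_fun fun n => ?_
        simp only [hcg]; ring
      rw [h1.tsum_eq]
      norm_num
    · funext x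
      obtain ⟨y, k, ε, hε, hy, hxeq, hgx⟩ := hgval x
      have hy2 : y / 2 ∈ Icc (0:ℝ) 1 := ⟨by linarith [hy.1], by linarith [hy.2]⟩
      have hcos : ∀ n : ℕ, Real.cos (x * ((2*(n:ℝ)+1) * Real.pi / 2))
          = Real.cos ((2*(n:ℝ)+1) * Real.pi * (y/2)) := by
        intro n
        have harg : x * ((2*(n:ℝ)+1) * Real.pi / 2)
            = ε * ((2*(n:ℝ)+1) * Real.pi * (y/2)) + ((k*(2*(n:ℤ)+1) : ℤ) : ℝ) * (2*Real.pi) := by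
          rw [hxeq]; push_cast; ring
        rw [harg]
        rcases hε with h|h
        · rw [h, one_mul, Real.cos_add_int_mul_two_pi]
        · rw [h, show (-1 : ℝ) * ((2*(n:ℝ)+1) * Real.pi * (y/2))
              = -((2*(n:ℝ)+1) * Real.pi * (y/2)) by ring,
            Real.cos_add_int_mul_two_pi, Real.cos_neg]
      have hS : HasSum (fun n => 2 * cg n * Real.cos (x * ((2*(n:ℝ)+1) * Real.pi / 2)))
          (1 - y) := by
        have h0 := (sOdd17 hy2).mul_left (8 / Real.pi ^ 2)
        have hval : (8 / Real.pi ^ 2) * (Real.pi ^ 2 / 8 - Real.pi ^ 2 * (y/2) / 4)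
            = 1 - y := by field_simp; ring
        rw [hval] at h0
        refine h0.congr_fun fun n => ?_
        rw [hcos n]
        simp only [hcg]
        push_cast
        ring
      rw [charFun_symMeasure17 _ le_rfl _ _ hcg0 hcgs x hS, hgx]
      push_cast
      ring
  · -- f ≠ g
    intro h
    have hf2 : f 2 = 1 := by
      have := hfper 0
      rw [zero_add] at this
      rw [this, hf 0 (by norm_num)]
      norm_num
    have hg2 : g 2 = -1 := by
      rw [hg 2 (by norm_num)]
      norm_num
    rw [h, hg2] at hf2
    norm_num at hf2
  · -- powers agree
    intro k hk x
    have h2 : f x ^ 2 = g x ^ 2 := by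
      rw [← sq_abs (f x), ← sq_abs (g x), habs x]
    calc f x ^ (2*k) = (f x ^ 2) ^ k := by rw [pow_mul]
      _ = (g x ^ 2) ^ k := by rw [h2]
      _ = g x ^ (2*k) := by rw [pow_mul]
end

section
/- Let f be a characteristic function with f^n = g^n for a characteristic function g and integer n ≥ 2, and suppose the components of S_f are E_{-k},…,E_k with phases m_j as in the structure theorem. Then m_{-j} = -m_j (mod n) for each j = 1,…,k; that is, the phase factors on symmetric components are complex conjugates. -/
open MeasureTheory Set

lemma isCharFun_neg {f : ℝ → ℂ} (hf : IsCharFun f) (x : ℝ) :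
    f (-x) = starRingEnd ℂ (f x) := by
  obtain ⟨μ, _, rfl⟩ := hf
  unfold charFunOf
  rw [← integral_conj]
  congr 1
  ext t
  rw [← Complex.exp_conj]
  congr 1
  simp [Complex.conj_I]

/-- If `g = e^{2πi m_j/n} f` on each component `E_j` of `S_f` (with `E_{-j} = -E_j`,
each `E_j` nonempty and inside `S_f`), then the phases on symmetric components are
conjugate: `m_{-j} ≡ -m_j (mod n)` for `j = 1, …, k`. -/
theorem stmt19 (f g : ℝ → ℂ) (hf : IsCharFun f) (hg : IsCharFun g)
    (n : ℕ) (hn : 2 ≤ n) (hpow : ∀ x, f x ^ n = g x ^ n)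
    (k : ℕ) (E : ℤ → Set ℝ)
    (hne : ∀ j ∈ Set.Icc (-(k : ℤ)) (k : ℤ), (E j).Nonempty)
    (hsub : ∀ j ∈ Set.Icc (-(k : ℤ)) (k : ℤ), E j ⊆ {x : ℝ | f x ≠ 0})
    (hsym : ∀ j : ℤ, E (-j) = -(E j))
    (m : ℤ → ℤ)
    (hphase : ∀ j ∈ Set.Icc (-(k : ℤ)) (k : ℤ), ∀ x ∈ E j,
      g x = Complex.exp (2 * Real.pi * (m j) / n * Complex.I) * f x) :
    ∀ j ∈ Set.Icc (1 : ℤ) (k : ℤ), (m (-j) : ZMod n) = -(m j : ZMod n) := by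
  intro j hj
  obtain ⟨hj1, hjk⟩ := hj
  have hjI : j ∈ Set.Icc (-(k : ℤ)) (k : ℤ) := ⟨by omega, hjk⟩
  have hjI' : -j ∈ Set.Icc (-(k : ℤ)) (k : ℤ) := ⟨by omega, by omega⟩
  obtain ⟨x, hx⟩ := hne j hjI
  have hfx : f x ≠ 0 := hsub j hjI hx
  have hnx : -x ∈ E (-j) := by
    rw [hsym j, Set.mem_neg, neg_neg]; exact hx
  have h1 := hphase (-j) hjI' (-x) hnx
  have h2 := hphase j hjI x hx
  rw [isCharFun_neg hf, isCharFun_neg hg, h2, map_mul] at h1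
  have hcfx : starRingEnd ℂ (f x) ≠ 0 := by simpa using hfx
  have hexp : Complex.exp (2 * Real.pi * (m (-j)) / n * Complex.I) =
      starRingEnd ℂ (Complex.exp (2 * Real.pi * (m j) / n * Complex.I)) :=
    mul_right_cancel₀ hcfx h1.symm
  rw [← Complex.exp_conj] at hexp
  have hconj : (starRingEnd ℂ) (2 * Real.pi * (m j) / n * Complex.I) =
      -(2 * Real.pi * (m j) / n * Complex.I) := by
    simp [Complex.conj_I, map_ofNat, map_div₀]
  rw [hconj, Complex.exp_eq_exp_iff_exists_int] at hexp
  obtain ⟨c, hc⟩ := hexp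
  have hn0 : (n : ℂ) ≠ 0 := Nat.cast_ne_zero.2 (by omega)
  have h2π : (2 * (Real.pi : ℂ) * Complex.I) ≠ 0 := by
    simp [Real.pi_ne_zero, Complex.I_ne_zero, Complex.ofReal_ne_zero]
  have hA : ((m (-j) : ℂ)) / n = -((m j : ℂ) / n) + c := by
    apply mul_right_cancel₀ h2π
    push_cast at hc ⊢
    linear_combination hc
  have hB : ((m (-j) : ℂ)) + (m j : ℂ) = c * n := by
    field_simp at hA
    linear_combination hA
  have hZ : m (-j) + m j = c * n := by exact_mod_cast hB
  have hdvd : (n : ℤ) ∣ m (-j) + m j := ⟨c, by rw [hZ]; ring⟩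
  rw [eq_neg_iff_add_eq_zero, ← Int.cast_add, ZMod.intCast_zmod_eq_zero_iff_dvd]
  exact hdvd
end
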